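/- Let 𝔅 be a bornology with closed base on a metric space X. Then X satisfies U_fin(𝒪_{𝔅ˢ}, 𝒪_{𝔅ˢ}) if and only if X satisfies U_fin(Γ_{𝔅ˢ}, 𝒪_{𝔅ˢ}). -/

import Mathlib

open Set Metric Filter

/-- A bornology on a metric space: an ideal of subsets covering `X`. -/
structure BornologyOn (X : Type*) [MetricSpace X] where
  sets : Set (Set X)
  union_mem : ∀ {A B : Set X}, A ∈ sets → B ∈ sets → A ∪ B ∈ sets
  subset_mem : ∀ {A B : Set X}, A ∈ sets → B ⊆ A → B ∈ sets
  covers : ∀ x : X, ∃ A ∈ sets, x ∈ A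

variable {X : Type*} [MetricSpace X]

/-- `𝔅` has a closed base: a cofinal subfamily consisting of closed sets. -/
def HasClosedBase (𝔅 : BornologyOn X) : Prop :=
  ∃ base ⊆ 𝔅.sets, (∀ C ∈ base, IsClosed C) ∧ ∀ A ∈ 𝔅.sets, ∃ C ∈ base, A ⊆ C

/-- The `δ`-enlargement `B^δ = ⋃_{x ∈ B} S(x, δ)`. -/
def enlarge (B : Set X) (δ : ℝ) : Set X := ⋃ x ∈ B, ball x δ

/-- A `𝔅ˢ`-cover: `X ∉ 𝒰` and every `B ∈ 𝔅` has `B^δ ⊆ U` for some `U ∈ 𝒰`, `δ > 0`. -/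
def IsBCover (𝔅 : BornologyOn X) (𝒰 : Set (Set X)) : Prop :=
  univ ∉ 𝒰 ∧ ∀ B ∈ 𝔅.sets, ∃ U ∈ 𝒰, ∃ δ > 0, enlarge B δ ⊆ U

/-- An open `𝔅ˢ`-cover. -/
def IsOpenBCover (𝔅 : BornologyOn X) (𝒰 : Set (Set X)) : Prop :=
  (∀ U ∈ 𝒰, IsOpen U) ∧ (∀ x : X, ∃ U ∈ 𝒰, x ∈ U) ∧ IsBCover 𝔅 𝒰

/-- A `γ_{𝔅ˢ}`-cover (set form): infinite family of open sets such that for each `B ∈ 𝔅`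
all but finitely many members contain some enlargement of `B`. -/
def IsGammaBCover (𝔅 : BornologyOn X) (𝒰 : Set (Set X)) : Prop :=
  𝒰.Infinite ∧ (∀ U ∈ 𝒰, IsOpen U) ∧
    ∀ B ∈ 𝔅.sets, {U ∈ 𝒰 | ¬ ∃ δ > 0, enlarge B δ ⊆ U}.Finite

/-- A `γ_{𝔅ˢ}`-cover given as a sequence `{Uₙ}`: infinite, open, and for each `B ∈ 𝔅`
there are `n₀` and `δₙ > 0` with `B^{δₙ} ⊆ Uₙ` for all `n ≥ n₀`. -/
def IsGammaBSeq (𝔅 : BornologyOn X) (U : ℕ → Set X) : Prop :=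
  (Set.range U).Infinite ∧ (∀ n, IsOpen (U n)) ∧
    ∀ B ∈ 𝔅.sets, ∃ n₀, ∀ n ≥ n₀, ∃ δ > 0, enlarge B δ ⊆ U n

/-- A `γ`-cover: infinite family of open sets, every point in all but finitely many members. -/
def IsGammaCover (𝒰 : Set (Set X)) : Prop :=
  𝒰.Infinite ∧ (∀ U ∈ 𝒰, IsOpen U) ∧ ∀ x : X, {U ∈ 𝒰 | x ∉ U}.Finite

/-- An open cover of `X`. -/
def IsOpenCover (𝒰 : Set (Set X)) : Prop :=
  (∀ U ∈ 𝒰, IsOpen U) ∧ ∀ x : X, ∃ U ∈ 𝒰, x ∈ U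

/-- The family `𝒪_{𝔅ˢ}` of countable open `𝔅ˢ`-covers. -/
def OBs (𝔅 : BornologyOn X) : Set (Set (Set X)) :=
  {𝒰 | 𝒰.Countable ∧ IsOpenBCover 𝔅 𝒰}

/-- The family `Γ_{𝔅ˢ}` of countable `γ_{𝔅ˢ}`-covers. -/
def GBs (𝔅 : BornologyOn X) : Set (Set (Set X)) :=
  {𝒰 | 𝒰.Countable ∧ IsGammaBCover 𝔅 𝒰}

/-- The family `𝒪` of countable open covers. -/
def Ocov (X : Type*) [MetricSpace X] : Set (Set (Set X)) :=
  {𝒰 | 𝒰.Countable ∧ IsOpenCover 𝒰}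

/-- The selection principle `S₁(𝒜, ℬ)`. -/
def S1 (𝒜 ℬ : Set (Set (Set X))) : Prop :=
  ∀ 𝒰 : ℕ → Set (Set X), (∀ n, 𝒰 n ∈ 𝒜) →
    ∃ sel : ℕ → Set X, (∀ n, sel n ∈ 𝒰 n) ∧ Set.range sel ∈ ℬ

/-- The selection principle `S_fin(𝒜, ℬ)`. -/
def Sfin (𝒜 ℬ : Set (Set (Set X))) : Prop :=
  ∀ 𝒰 : ℕ → Set (Set X), (∀ n, 𝒰 n ∈ 𝒜) →
    ∃ 𝒱 : ℕ → Set (Set X), (∀ n, 𝒱 n ⊆ 𝒰 n ∧ (𝒱 n).Finite) ∧ (⋃ n, 𝒱 n) ∈ ℬ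

/-- The selection principle `U_fin(𝒜, ℬ)`. -/
def Ufin (𝒜 ℬ : Set (Set (Set X))) : Prop :=
  ∀ 𝒰 : ℕ → Set (Set X), (∀ n, 𝒰 n ∈ 𝒜) →
    ∃ 𝒱 : ℕ → Set (Set X), (∀ n, 𝒱 n ⊆ 𝒰 n ∧ (𝒱 n).Finite) ∧
      ((Set.range fun n => ⋃₀ 𝒱 n) ∈ ℬ ∨ ∃ n, ⋃₀ 𝒱 n = univ)

/-- ONE has a winning strategy in `G₁(𝒜, ℬ)`. -/
def OneWinsG1 (𝒜 ℬ : Set (Set (Set X))) : Prop :=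
  ∃ σ : List (Set X) → Set (Set X),
    (∀ h, σ h ∈ 𝒜) ∧
    ∀ play : ℕ → Set X,
      (∀ n, play n ∈ σ (List.ofFn fun i : Fin n => play i.1)) →
      Set.range play ∉ ℬ

/-- ONE has a winning strategy in `G_fin(𝒜, ℬ)`. -/
def OneWinsGfin (𝒜 ℬ : Set (Set (Set X))) : Prop :=
  ∃ σ : List (Set (Set X)) → Set (Set X),
    (∀ h, σ h ∈ 𝒜) ∧
    ∀ play : ℕ → Set (Set X),
      (∀ n, play n ⊆ σ (List.ofFn fun i : Fin n => play i.1) ∧ (play n).Finite) →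
      (⋃ n, play n) ∉ ℬ

/-- The winning condition in the `𝔅ˢ`-Hurewicz game / property: every `B ∈ 𝔅` is
eventually `δ`-enlarged into some member of `𝒱ₙ`. -/
def HurSel (𝔅 : BornologyOn X) (𝒱 : ℕ → Set (Set X)) : Prop :=
  ∀ B ∈ 𝔅.sets, ∃ n₀, ∀ n ≥ n₀, ∃ δ > 0, ∃ U ∈ 𝒱 n, enlarge B δ ⊆ U

/-- The strong `𝔅`-Hurewicz property. -/
def BsHurewicz (𝔅 : BornologyOn X) : Prop :=
  ∀ 𝒰 : ℕ → Set (Set X), (∀ n, 𝒰 n ∈ OBs 𝔅) →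
    ∃ 𝒱 : ℕ → Set (Set X), (∀ n, 𝒱 n ⊆ 𝒰 n ∧ (𝒱 n).Finite) ∧ HurSel 𝔅 𝒱

/-- ONE has a winning strategy in the `𝔅ˢ`-Hurewicz game. -/
def OneWinsHurewicz (𝔅 : BornologyOn X) : Prop :=
  ∃ σ : List (Set (Set X)) → Set (Set X),
    (∀ h, σ h ∈ OBs 𝔅) ∧
    ∀ play : ℕ → Set (Set X),
      (∀ n, play n ⊆ σ (List.ofFn fun i : Fin n => play i.1) ∧ (play n).Finite) →
      ¬ HurSel 𝔅 play

/-- A `𝔅ˢ`-groupable cover. -/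
def BsGroupable (𝔅 : BornologyOn X) (𝒰 : Set (Set X)) : Prop :=
  ∃ 𝒢 : ℕ → Set (Set X), (∀ n, (𝒢 n).Finite) ∧
    (∀ m n, m ≠ n → Disjoint (𝒢 m) (𝒢 n)) ∧ (⋃ n, 𝒢 n) = 𝒰 ∧ HurSel 𝔅 𝒢

/-- The family `𝒪_{𝔅ˢ}^{gp}` of `𝔅ˢ`-groupable open covers. -/
def OBsgp (𝔅 : BornologyOn X) : Set (Set (Set X)) :=
  {𝒰 | IsOpenCover 𝒰 ∧ BsGroupable 𝔅 𝒰}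

/-- The basic `τ_𝔅ˢ` neighbourhood `[B, ε]ˢ(f)` in `C(X)`. -/
def sball (f : C(X, ℝ)) (B : Set X) (ε : ℝ) : Set C(X, ℝ) :=
  {g | ∃ δ > 0, ∀ x ∈ enlarge B δ, |f x - g x| < ε}

/-- The topology `τ_𝔅ˢ` of strong uniform convergence on `𝔅` on `C(X)`. -/
def tauBs (𝔅 : BornologyOn X) : TopologicalSpace C(X, ℝ) :=
  TopologicalSpace.generateFrom
    {S | ∃ f : C(X, ℝ), ∃ B ∈ 𝔅.sets, ∃ ε > 0, S = sball f B ε}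

/-- Countable `T`-tightness of a topological space. -/
def CountableTTightness {Y : Type*} (t : TopologicalSpace Y) : Prop :=
  ∀ ρ : Cardinal.{0}, ρ.IsRegular → Cardinal.aleph0 < ρ →
    ∀ A : Ordinal.{0} → Set Y, (∀ α β, α ≤ β → A α ⊆ A β) →
      (∀ α, α < ρ.ord → @IsClosed _ t (A α)) →
      @IsClosed _ t (⋃ α ∈ {α | α < ρ.ord}, A α)

/-!
A `γ_{𝔅ˢ}`-cover that does not contain `X` is already an open `𝔅ˢ`-cover, which gives one
direction. Conversely, enumerate a countable open `𝔅ˢ`-cover without finite subcover as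
`U₀, U₁, …` and pass to the partial unions `Wₘ = U₀ ∪ ⋯ ∪ Uₘ`: they form a `γ_{𝔅ˢ}`-cover, and
a finite selection from the `Wₘ` is dominated by a single `Wₘ`, that is, by finitely many `Uₖ`.
Sequences in which some cover has a finite subcover are settled by the clause `⋃ Bₙ = X`.
-/

def HasNoFiniteSubcover {α : Type*} (𝒰 : Set (Set α)) : Prop :=
  ∀ 𝒱 ⊆ 𝒰, 𝒱.Finite → ⋃₀ 𝒱 ≠ univ

theorem HasNoFiniteSubcover.univ_notMem {α : Type*} {𝒰 : Set (Set α)}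
    (h : HasNoFiniteSubcover 𝒰) : univ ∉ 𝒰 := fun hu =>
  h {univ} (singleton_subset_iff.2 hu) (finite_singleton _) (sUnion_singleton _)

theorem HasNoFiniteSubcover.nonempty {α : Type*} {𝒰 : Set (Set α)}
    (h : HasNoFiniteSubcover 𝒰) (hcov : ∀ x : α, ∃ U ∈ 𝒰, x ∈ U) : 𝒰.Nonempty := by
  obtain ⟨x, -⟩ := (ne_univ_iff_exists_notMem _).1 (h ∅ (empty_subset _) finite_empty)
  obtain ⟨U, hU, -⟩ := hcov x
  exact ⟨U, hU⟩

theorem exists_sUnion_subset_of_subset_range {ι α : Type*} [Preorder ι] [IsDirectedOrder ι]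
    [Nonempty ι] {W : ι → Set α} (hW : Monotone W) {𝒱 : Set (Set α)} (h𝒱 : 𝒱.Finite)
    (hsub : 𝒱 ⊆ range W) : ∃ i, ⋃₀ 𝒱 ⊆ W i := by
  rw [← image_univ] at hsub
  obtain ⟨s, -, hs, rfl⟩ := exists_subset_image_finite_and.1 ⟨𝒱, hsub, h𝒱, rfl⟩
  obtain ⟨i, hi⟩ := hs.bddAbove
  exact ⟨i, sUnion_subset (forall_mem_image.2 fun j hj => hW (hi hj))⟩

theorem accumulate_eq_sUnion_image {α : Type*} (f : ℕ → Set α) (m : ℕ) :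
    accumulate f m = ⋃₀ (f '' Iic m) := by
  rw [accumulate_def, sUnion_image]
  rfl

theorem HasNoFiniteSubcover.accumulate_ne_univ {α : Type*} {f : ℕ → Set α}
    (h : HasNoFiniteSubcover (range f)) (m : ℕ) : accumulate f m ≠ univ := by
  rw [accumulate_eq_sUnion_image]
  exact h _ (image_subset_range _ _) ((finite_Iic m).image f)

theorem HasNoFiniteSubcover.range_accumulate {α : Type*} {f : ℕ → Set α}
    (h : HasNoFiniteSubcover (range f)) : HasNoFiniteSubcover (range (accumulate f)) := by
  intro 𝒱 hsub h𝒱 hcov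
  obtain ⟨m, hm⟩ := exists_sUnion_subset_of_subset_range monotone_accumulate h𝒱 hsub
  exact h.accumulate_ne_univ m (univ_subset_iff.1 (hcov ▸ hm))

theorem BornologyOn.singleton_mem (𝔅 : BornologyOn X) (x : X) : {x} ∈ 𝔅.sets := by
  obtain ⟨A, hA, hxA⟩ := 𝔅.covers x
  exact 𝔅.subset_mem hA (singleton_subset_iff.2 hxA)

theorem subset_enlarge (B : Set X) {δ : ℝ} (hδ : 0 < δ) : B ⊆ enlarge B δ := fun _ hx =>
  mem_biUnion hx (mem_ball_self hδ)

theorem IsGammaBCover.exists_enlarge_subset {𝔅 : BornologyOn X} {𝒰 : Set (Set X)}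
    (h : IsGammaBCover 𝔅 𝒰) {B : Set X} (hB : B ∈ 𝔅.sets) :
    ∃ U ∈ 𝒰, ∃ δ > 0, enlarge B δ ⊆ U := by
  obtain ⟨U, hU, hgood⟩ := (h.1.sdiff (h.2.2 B hB)).nonempty
  exact ⟨U, hU, not_not.1 fun hbad => hgood ⟨hU, hbad⟩⟩

theorem IsGammaBCover.isOpenBCover {𝔅 : BornologyOn X} {𝒰 : Set (Set X)}
    (h : IsGammaBCover 𝔅 𝒰) (hu : univ ∉ 𝒰) : IsOpenBCover 𝔅 𝒰 := by
  refine ⟨h.2.1, fun x => ?_, hu, fun B hB => h.exists_enlarge_subset hB⟩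
  obtain ⟨U, hU, δ, hδ, hsub⟩ := h.exists_enlarge_subset (𝔅.singleton_mem x)
  exact ⟨U, hU, hsub (subset_enlarge {x} hδ rfl)⟩

theorem isGammaBCover_range_accumulate {𝔅 : BornologyOn X} {f : ℕ → Set X}
    (hf : IsOpenBCover 𝔅 (range f)) (hnf : HasNoFiniteSubcover (range f)) :
    IsGammaBCover 𝔅 (range (accumulate f)) := by
  obtain ⟨hopen, hcov, -, hB⟩ := hf
  refine ⟨fun hfin => ?_, ?_, fun B hB' => ?_⟩
  · obtain ⟨m, hm⟩ := exists_sUnion_subset_of_subset_range monotone_accumulate hfin subset_rfl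
    refine hnf.accumulate_ne_univ m (eq_univ_of_forall fun x => hm ?_)
    obtain ⟨_, ⟨k, rfl⟩, hx⟩ := hcov x
    exact ⟨accumulate f k, mem_range_self k, subset_accumulate hx⟩
  · rintro _ ⟨m, rfl⟩
    rw [accumulate_eq_sUnion_image]
    exact isOpen_sUnion fun U hU => hopen U (image_subset_range _ _ hU)
  · obtain ⟨_, ⟨k, rfl⟩, δ, hδ, hsub⟩ := hB B hB'
    refine ((finite_Iio k).image (accumulate f)).subset ?_
    rintro _ ⟨⟨m, rfl⟩, hbad⟩
    refine ⟨m, mem_Iio.2 (not_le.1 fun hkm => hbad ⟨δ, hδ, ?_⟩), rfl⟩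
    exact hsub.trans (subset_accumulate.trans (monotone_accumulate hkm))

theorem range_mem_OBs_of_subset {𝔅 : BornologyOn X} {S T : ℕ → Set X}
    (hS : range S ∈ OBs 𝔅) (hST : ∀ n, S n ⊆ T n) (hT : ∀ n, IsOpen (T n))
    (hTne : ∀ n, T n ≠ univ) : range T ∈ OBs 𝔅 := by
  obtain ⟨-, -, hcov, -, hB⟩ := hS
  refine ⟨countable_range T, forall_mem_range.2 hT, fun x => ?_,
    fun ⟨n, hn⟩ => hTne n hn, fun B hB' => ?_⟩
  · obtain ⟨_, ⟨n, rfl⟩, hx⟩ := hcov x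
    exact ⟨T n, mem_range_self n, hST n hx⟩
  · obtain ⟨_, ⟨n, rfl⟩, δ, hδ, hsub⟩ := hB B hB'
    exact ⟨T n, mem_range_self n, δ, hδ, hsub.trans (hST n)⟩

theorem ufin_iff_forall_hasNoFiniteSubcover {α : Type*} {𝒜 ℬ : Set (Set (Set α))} :
    Ufin 𝒜 ℬ ↔ ∀ 𝒰 : ℕ → Set (Set α), (∀ n, 𝒰 n ∈ 𝒜) → (∀ n, HasNoFiniteSubcover (𝒰 n)) →
      ∃ 𝒱 : ℕ → Set (Set α), (∀ n, 𝒱 n ⊆ 𝒰 n ∧ (𝒱 n).Finite) ∧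
        (range fun n => ⋃₀ 𝒱 n) ∈ ℬ := by
  classical
  refine ⟨fun H 𝒰 h𝒰 hnf => ?_, fun H 𝒰 h𝒰 => ?_⟩
  · obtain ⟨𝒱, h𝒱, hmem | ⟨n, hn⟩⟩ := H 𝒰 h𝒰
    · exact ⟨𝒱, h𝒱, hmem⟩
    · exact absurd hn (hnf n _ (h𝒱 n).1 (h𝒱 n).2)
  · by_cases hnf : ∀ n, HasNoFiniteSubcover (𝒰 n)
    · obtain ⟨𝒱, h𝒱, hmem⟩ := H 𝒰 h𝒰 hnf
      exact ⟨𝒱, h𝒱, Or.inl hmem⟩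
    · simp only [HasNoFiniteSubcover, not_forall, not_not] at hnf
      obtain ⟨n, F, hF, hFfin, hFcov⟩ := hnf
      refine ⟨Function.update (fun _ => ∅) n F, fun m => ?_, Or.inr ⟨n, by simpa⟩⟩
      rcases eq_or_ne m n with rfl | hm <;> simp [*]

theorem ufin_GBs_of_ufin_OBs {𝔅 : BornologyOn X} (H : Ufin (OBs 𝔅) (OBs 𝔅)) :
    Ufin (GBs 𝔅) (OBs 𝔅) := by
  rw [ufin_iff_forall_hasNoFiniteSubcover] at H ⊢
  intro 𝒰 h𝒰 hnf
  exact H 𝒰 (fun n => ⟨(h𝒰 n).1, (h𝒰 n).2.isOpenBCover (hnf n).univ_notMem⟩) hnf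

theorem ufin_OBs_of_ufin_GBs {𝔅 : BornologyOn X} (H : Ufin (GBs 𝔅) (OBs 𝔅)) :
    Ufin (OBs 𝔅) (OBs 𝔅) := by
  rw [ufin_iff_forall_hasNoFiniteSubcover] at H ⊢
  intro 𝒰 h𝒰 hnf
  choose f hf using fun n => (h𝒰 n).1.exists_eq_range ((hnf n).nonempty (h𝒰 n).2.2.1)
  obtain rfl : 𝒰 = fun n => range (f n) := funext hf
  obtain ⟨𝒱, h𝒱, hmem⟩ := H (fun n => range (accumulate (f n)))
    (fun n => ⟨countable_range _, isGammaBCover_range_accumulate (h𝒰 n).2 (hnf n)⟩)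
    (fun n => (hnf n).range_accumulate)
  choose M hM using fun n =>
    exists_sUnion_subset_of_subset_range monotone_accumulate (h𝒱 n).2 (h𝒱 n).1
  refine ⟨fun n => f n '' Iic (M n), fun n => ⟨image_subset_range _ _, (finite_Iic _).image _⟩, ?_⟩
  simp only [← accumulate_eq_sUnion_image]
  refine range_mem_OBs_of_subset hmem hM (fun n => ?_) fun n => (hnf n).accumulate_ne_univ _
  exact (isGammaBCover_range_accumulate (h𝒰 n).2 (hnf n)).2.1 _ (mem_range_self _)

theorem stmt10_general (𝔅 : BornologyOn X) :
    Ufin (OBs 𝔅) (OBs 𝔅) ↔ Ufin (GBs 𝔅) (OBs 𝔅) :=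
  ⟨ufin_GBs_of_ufin_OBs, ufin_OBs_of_ufin_GBs⟩

theorem stmt10 (𝔅 : BornologyOn X) (hcb : HasClosedBase 𝔅) :
    Ufin (OBs 𝔅) (OBs 𝔅) ↔ Ufin (GBs 𝔅) (OBs 𝔅) :=
  stmt10_general 𝔅
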